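/- arXiv:quant-ph/0702153 — 5 statements merged into one kernel-verified Lean document; each statement's English description precedes it below -/
import Mathlib

section
/- If x and y are vectors in R^d with x majorized by y (x ≺ y), then for any finitely supported probability vector z, the tensor product x ⊗ z is majorized by y ⊗ z. -/
open scoped BigOperators

/-- Sum of the `k` largest coordinates of `f`, expressed as the supremum of
sums over `k`-element subsets of the index set. -/
noncomputable def kMaxSum {ι : Type*} (f : ι → ℝ) (k : ℕ) : ℝ :=
  sSup {t : ℝ | ∃ A : Finset ι, A.card = k ∧ ∑ i ∈ A, f i = t}

/-- Submajorization: every sum of `k` largest coordinates of `f` is at most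
the corresponding sum for `g`. -/
def Submaj {ι κ : Type*} (f : ι → ℝ) (g : κ → ℝ) : Prop :=
  ∀ k : ℕ, kMaxSum f k ≤ kMaxSum g k

/-- Majorization: equal coordinate sums together with submajorization. -/
def Maj {ι κ : Type*} [Fintype ι] [Fintype κ] (f : ι → ℝ) (g : κ → ℝ) : Prop :=
  (∑ i, f i = ∑ j, g j) ∧ Submaj f g

/-- Tensor product of two vectors: coordinates `(f i * g j)`. -/
def tensor {ι κ : Type*} (f : ι → ℝ) (g : κ → ℝ) : ι × κ → ℝ :=
  fun p => f p.1 * g p.2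

lemma kMaxSum_set_finite {ι : Type*} [Fintype ι] (f : ι → ℝ) (k : ℕ) :
    {t : ℝ | ∃ A : Finset ι, A.card = k ∧ ∑ i ∈ A, f i = t}.Finite := by
  have h : {t : ℝ | ∃ A : Finset ι, A.card = k ∧ ∑ i ∈ A, f i = t} ⊆
      (fun A : Finset ι => ∑ i ∈ A, f i) '' Set.univ := by
    rintro t ⟨A, _, rfl⟩; exact ⟨A, trivial, rfl⟩
  exact (Set.finite_univ.image _).subset h

lemma le_kMaxSum {ι : Type*} [Fintype ι] (f : ι → ℝ) (A : Finset ι) :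
    ∑ i ∈ A, f i ≤ kMaxSum f A.card :=
  le_csSup (kMaxSum_set_finite f A.card).bddAbove ⟨A, rfl, rfl⟩

lemma exists_kMaxSum {ι : Type*} [Fintype ι] (f : ι → ℝ) (k : ℕ) (hk : k ≤ Fintype.card ι) :
    ∃ A : Finset ι, A.card = k ∧ ∑ i ∈ A, f i = kMaxSum f k := by
  obtain ⟨A, _, hA⟩ := Finset.exists_subset_card_eq (s := (Finset.univ : Finset ι)) (n := k)
    (by simpa using hk)
  have hne : {t : ℝ | ∃ B : Finset ι, B.card = k ∧ ∑ i ∈ B, f i = t}.Nonempty :=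
    ⟨_, A, hA, rfl⟩
  obtain ⟨B, hB, hBs⟩ := hne.csSup_mem (kMaxSum_set_finite f k)
  exact ⟨B, hB, hBs⟩

lemma kMaxSum_eq_zero {ι : Type*} [Fintype ι] (f : ι → ℝ) (k : ℕ)
    (hk : Fintype.card ι < k) : kMaxSum f k = 0 := by
  have : {t : ℝ | ∃ A : Finset ι, A.card = k ∧ ∑ i ∈ A, f i = t} = ∅ := by
    ext t
    simp only [Set.mem_setOf_eq, Set.mem_empty_iff_false, iff_false, not_exists]
    rintro A ⟨hA, -⟩
    exact absurd (A.card_le_univ.trans_eq (Finset.card_univ)) (by omega)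
  rw [kMaxSum, this, Real.sSup_empty]

/-- If `x ≺ y` then `x ⊗ z ≺ y ⊗ z` for any finitely supported probability vector `z`. -/
theorem majorization_tensor_right {d e : ℕ} (x y : Fin d → ℝ) (z : Fin e → ℝ)
    (hz0 : ∀ j, 0 ≤ z j) (hz1 : ∑ j, z j = 1)
    (hxy : Maj x y) : Maj (tensor x z) (tensor y z) := by
  obtain ⟨hsum, hsub⟩ := hxy
  constructor
  · simp only [tensor, Fintype.sum_prod_type, ← Finset.mul_sum, hz1, mul_one]
    exact hsum
  intro k
  by_cases hk : k ≤ Fintype.card (Fin d × Fin e)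
  · -- obtain maximizing A for tensor x z
    obtain ⟨A, hAcard, hAsum⟩ := exists_kMaxSum (tensor x z) k hk
    rw [← hAsum]
    -- fiberwise data
    set Aj : Fin e → Finset (Fin d) :=
      fun j => (A.filter (fun p => p.2 = j)).image Prod.fst with hAj
    have hinj : ∀ j : Fin e, Set.InjOn Prod.fst ((A.filter (fun p => p.2 = j) : Finset (Fin d × Fin e)) : Set (Fin d × Fin e)) := by
      intro j p hp q hq h
      simp only [Finset.coe_filter, Set.mem_setOf_eq] at hp hq
      exact Prod.ext h (hp.2.trans hq.2.symm)
    have hAjcard : ∀ j, (Aj j).card = (A.filter (fun p => p.2 = j)).card := by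
      intro j; exact Finset.card_image_of_injOn (hinj j)
    -- step 1: rewrite the A-sum fiberwise
    have h1 : ∑ p ∈ A, tensor x z p = ∑ j : Fin e, z j * ∑ i ∈ Aj j, x i := by
      rw [← Finset.sum_fiberwise A (fun p => p.2) (fun p => tensor x z p)]
      refine Finset.sum_congr rfl fun j _ => ?_
      rw [hAj]
      rw [Finset.sum_image (fun p hp q hq h => hinj j hp hq h)]
      rw [Finset.mul_sum]
      refine Finset.sum_congr rfl fun p hp => ?_
      have : p.2 = j := (Finset.mem_filter.mp hp).2
      simp [tensor, this, mul_comm]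
    -- step 2: each fiber sum bounded by kMaxSum y
    have h2 : ∀ j : Fin e, ∑ i ∈ Aj j, x i ≤ kMaxSum y ((Aj j).card) := by
      intro j
      exact (le_kMaxSum x (Aj j)).trans (hsub _)
    -- step 3: choose B j achieving kMaxSum y
    have hBj : ∀ j : Fin e, ∃ B : Finset (Fin d), B.card = (Aj j).card ∧
        ∑ i ∈ B, y i = kMaxSum y ((Aj j).card) := by
      intro j
      exact exists_kMaxSum y _ (by simpa using (Aj j).card_le_univ)
    choose B hBcard hBsum using hBj
    -- the combined set C
    set C : Finset (Fin d × Fin e) :=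
      Finset.univ.biUnion (fun j : Fin e => (B j).image (fun i => (i, j))) with hC
    have hdisj : ∀ j₁ ∈ (Finset.univ : Finset (Fin e)), ∀ j₂ ∈ Finset.univ, j₁ ≠ j₂ →
        Disjoint ((B j₁).image (fun i => (i, j₁))) ((B j₂).image (fun i => (i, j₂))) := by
      intro j₁ _ j₂ _ hne
      rw [Finset.disjoint_left]
      rintro p hp₁ hp₂
      obtain ⟨i₁, -, rfl⟩ := Finset.mem_image.mp hp₁
      obtain ⟨i₂, -, h⟩ := Finset.mem_image.mp hp₂
      exact hne ((congrArg Prod.snd h).symm)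
    have himgcard : ∀ j : Fin e, ((B j).image (fun i => (i, j))).card = (B j).card :=
      fun j => Finset.card_image_of_injective _ (fun a b h => (Prod.mk.injEq _ _ _ _ ▸ h).1)
    have hCcard : C.card = k := by
      rw [hC, Finset.card_biUnion hdisj]
      have : ∑ j : Fin e, ((B j).image (fun i => (i, j))).card
          = ∑ j : Fin e, (A.filter (fun p => p.2 = j)).card := by
        refine Finset.sum_congr rfl fun j _ => ?_
        rw [himgcard, hBcard, hAjcard]
      rw [this, ← Finset.card_eq_sum_card_fiberwise (fun p _ => Finset.mem_univ p.2), hAcard]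
    have hCsum : ∑ p ∈ C, tensor y z p = ∑ j : Fin e, z j * kMaxSum y ((Aj j).card) := by
      rw [hC, Finset.sum_biUnion hdisj]
      refine Finset.sum_congr rfl fun j _ => ?_
      rw [Finset.sum_image (fun a _ b _ h => (Prod.mk.injEq _ _ _ _ ▸ h).1)]
      simp only [tensor]
      rw [← hBsum j, Finset.mul_sum]
      exact Finset.sum_congr rfl fun i _ => mul_comm _ _
    calc ∑ p ∈ A, tensor x z p = ∑ j : Fin e, z j * ∑ i ∈ Aj j, x i := h1
      _ ≤ ∑ j : Fin e, z j * kMaxSum y ((Aj j).card) :=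
          Finset.sum_le_sum fun j _ => mul_le_mul_of_nonneg_left (h2 j) (hz0 j)
      _ = ∑ p ∈ C, tensor y z p := hCsum.symm
      _ ≤ kMaxSum (tensor y z) C.card := le_kMaxSum _ _
      _ = kMaxSum (tensor y z) k := by rw [hCcard]
  · push_neg at hk
    rw [kMaxSum_eq_zero _ _ hk, kMaxSum_eq_zero _ _ hk]
end

section
/- Let x and y be nonnegative vectors in R^d such that for all t > 0, Σ_{i : x_i ≥ t} x_i ≤ Σ_{i : y_i ≥ t} y_i. Then x is submajorized by y. -/
open scoped BigOperators

/-- Key lemma: the "water-filling" sums `∑ (v - t)₊` are comparable, by downward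
induction on the number of coordinates strictly above `t`. -/
lemma key_aux {d : ℕ} (x y : Fin d → ℝ) (hx : ∀ i, 0 ≤ x i) (hy : ∀ i, 0 ≤ y i)
    (h : ∀ t : ℝ, 0 < t →
      ∑ i ∈ Finset.univ.filter (fun i => t ≤ x i), x i ≤
      ∑ i ∈ Finset.univ.filter (fun i => t ≤ y i), y i) :
    ∀ n : ℕ, ∀ t : ℝ, 0 ≤ t →
      (Finset.univ.filter (fun i => t < x i)).card
        + (Finset.univ.filter (fun i => t < y i)).card ≤ n →
      ∑ i, max (x i - t) 0 ≤ ∑ i, max (y i - t) 0 := by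
  intro n
  induction n with
  | zero =>
    intro t ht hcard
    have hxall : ∀ i, x i ≤ t := by
      intro i
      by_contra hc
      push_neg at hc
      have : i ∈ Finset.univ.filter (fun i => t < x i) := by
        simp [hc]
      have h1 : 0 < (Finset.univ.filter (fun i => t < x i)).card :=
        Finset.card_pos.mpr ⟨i, this⟩
      omega
    have hyall : ∀ i, 0 ≤ max (y i - t) 0 := fun i => le_max_right _ _
    have hx0 : ∑ i, max (x i - t) 0 = 0 :=
      Finset.sum_eq_zero fun i _ => max_eq_right (by linarith [hxall i])
    rw [hx0]
    exact Finset.sum_nonneg fun i _ => hyall i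
  | succ n ih =>
    intro t ht hcard
    by_cases hemp : (∀ i, x i ≤ t) ∧ (∀ i, y i ≤ t)
    · obtain ⟨hxall, hyall⟩ := hemp
      have hx0 : ∑ i, max (x i - t) 0 = 0 :=
        Finset.sum_eq_zero fun i _ => max_eq_right (by linarith [hxall i])
      rw [hx0]
      exact Finset.sum_nonneg fun i _ => le_max_right _ _
    · -- let u be the smallest coordinate value strictly above t
      set V : Finset ℝ :=
        ((Finset.univ.filter (fun i => t < x i)).image x)
          ∪ ((Finset.univ.filter (fun i => t < y i)).image y) with hV
      have hVne : V.Nonempty := by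
        rcases Classical.em (∀ i, x i ≤ t) with hax | hax
        · have hay : ¬ ∀ i, y i ≤ t := fun hay => hemp ⟨hax, hay⟩
          push_neg at hay
          obtain ⟨i, hi⟩ := hay
          refine ⟨y i, ?_⟩
          rw [hV, Finset.mem_union]
          right
          simp only [Finset.mem_image, Finset.mem_filter, Finset.mem_univ, true_and]
          exact ⟨i, hi, rfl⟩
        · push_neg at hax
          obtain ⟨i, hi⟩ := hax
          refine ⟨x i, ?_⟩
          rw [hV, Finset.mem_union]
          left
          simp only [Finset.mem_image, Finset.mem_filter, Finset.mem_univ, true_and]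
          exact ⟨i, hi, rfl⟩
      set u : ℝ := V.min' hVne with hu
      have hVgt : ∀ v ∈ V, t < v := by
        intro v hv
        rw [hV, Finset.mem_union] at hv
        rcases hv with hv | hv <;>
        · simp only [Finset.mem_image, Finset.mem_filter, Finset.mem_univ, true_and] at hv
          obtain ⟨i, hi1, hi2⟩ := hv
          exact hi2 ▸ hi1
      have htu : t < u := hVgt u (V.min'_mem hVne)
      have hxu : ∀ i, t < x i → u ≤ x i := by
        intro i hi
        apply V.min'_le
        rw [hV, Finset.mem_union]
        left
        simp only [Finset.mem_image, Finset.mem_filter, Finset.mem_univ, true_and]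
        exact ⟨i, hi, rfl⟩
      have hyu : ∀ i, t < y i → u ≤ y i := by
        intro i hi
        apply V.min'_le
        rw [hV, Finset.mem_union]
        right
        simp only [Finset.mem_image, Finset.mem_filter, Finset.mem_univ, true_and]
        exact ⟨i, hi, rfl⟩
      -- equivalence of filters
      have hfx : Finset.univ.filter (fun i => u ≤ x i)
          = Finset.univ.filter (fun i => t < x i) := by
        apply Finset.filter_congr
        intro i _
        constructor
        · intro hui; exact lt_of_lt_of_le htu hui
        · intro hti; exact hxu i hti
      have hfy : Finset.univ.filter (fun i => u ≤ y i)
          = Finset.univ.filter (fun i => t < y i) := by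
        apply Finset.filter_congr
        intro i _
        constructor
        · intro hui; exact lt_of_lt_of_le htu hui
        · intro hti; exact hyu i hti
      set m : ℕ := (Finset.univ.filter (fun i => u ≤ x i)).card with hm
      set p : ℕ := (Finset.univ.filter (fun i => u ≤ y i)).card with hp
      -- splitting identities
      have split : ∀ (f : Fin d → ℝ), (∀ i, t < f i → u ≤ f i) →
          ∑ i, max (f i - t) 0
            = ∑ i, max (f i - u) 0
              + (u - t) * (Finset.univ.filter (fun i => u ≤ f i)).card := by
        intro f hf
        have hpt : ∀ i, max (f i - t) 0
            = max (f i - u) 0 + (if u ≤ f i then u - t else 0) := by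
          intro i
          by_cases h1 : u ≤ f i
          · rw [if_pos h1, max_eq_left (by linarith), max_eq_left (by linarith)]
            ring
          · push_neg at h1
            have h2 : f i ≤ t := by
              by_contra h3
              push_neg at h3
              exact absurd (hf i h3) (not_le.mpr h1)
            rw [if_neg (not_le.mpr h1), max_eq_right (by linarith),
              max_eq_right (by linarith)]
            ring
        calc ∑ i, max (f i - t) 0
            = ∑ i, (max (f i - u) 0 + (if u ≤ f i then u - t else 0)) :=
              Finset.sum_congr rfl fun i _ => hpt i
          _ = ∑ i, max (f i - u) 0 + ∑ i, (if u ≤ f i then u - t else 0) :=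
              Finset.sum_add_distrib
          _ = ∑ i, max (f i - u) 0
              + (u - t) * (Finset.univ.filter (fun i => u ≤ f i)).card := by
              rw [Finset.sum_ite, Finset.sum_const, Finset.sum_const_zero, add_zero,
                nsmul_eq_mul]
              ring
      have splitx := split x hxu
      have splity := split y hyu
      -- upper-sum identities at level u
      have Hsum : ∀ (f : Fin d → ℝ),
          ∑ i ∈ Finset.univ.filter (fun i => u ≤ f i), f i
            = ∑ i, max (f i - u) 0
              + u * (Finset.univ.filter (fun i => u ≤ f i)).card := by
        intro f
        have h1 : ∑ i, max (f i - u) 0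
            = ∑ i ∈ Finset.univ.filter (fun i => u ≤ f i), max (f i - u) 0 := by
          rw [Finset.sum_filter]
          apply Finset.sum_congr rfl
          intro i _
          by_cases h2 : u ≤ f i
          · rw [if_pos h2]
          · rw [if_neg h2, max_eq_right (by push_neg at h2; linarith)]
        have h2 : ∑ i ∈ Finset.univ.filter (fun i => u ≤ f i), f i
            = ∑ i ∈ Finset.univ.filter (fun i => u ≤ f i), (max (f i - u) 0 + u) := by
          apply Finset.sum_congr rfl
          intro i hi
          simp only [Finset.mem_filter] at hi
          rw [max_eq_left (by linarith [hi.2])]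
          ring
        rw [h2, Finset.sum_add_distrib, Finset.sum_const, nsmul_eq_mul, h1, mul_comm]
      -- inductive hypothesis at u
      have hcard' : (Finset.univ.filter (fun i => u < x i)).card
          + (Finset.univ.filter (fun i => u < y i)).card ≤ n := by
        have hsubx : Finset.univ.filter (fun i => u < x i)
            ⊆ Finset.univ.filter (fun i => t < x i) := by
          intro i hi
          simp only [Finset.mem_filter, Finset.mem_univ, true_and] at hi ⊢
          linarith
        have hsuby : Finset.univ.filter (fun i => u < y i)
            ⊆ Finset.univ.filter (fun i => t < y i) := by
          intro i hi
          simp only [Finset.mem_filter, Finset.mem_univ, true_and] at hi ⊢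
          linarith
        have humem : u ∈ V := V.min'_mem hVne
        rw [hV, Finset.mem_union] at humem
        have hstrict : (Finset.univ.filter (fun i => u < x i)).card
            < (Finset.univ.filter (fun i => t < x i)).card
            ∨ (Finset.univ.filter (fun i => u < y i)).card
            < (Finset.univ.filter (fun i => t < y i)).card := by
          rcases humem with hmem | hmem
          · left
            simp only [Finset.mem_image, Finset.mem_filter, Finset.mem_univ,
              true_and] at hmem
            obtain ⟨i, hi1, hi2⟩ := hmem
            apply Finset.card_lt_card
            constructor
            · exact hsubx
            · intro hsub
              have : i ∈ Finset.univ.filter (fun i => u < x i) := hsub (by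
                simp only [Finset.mem_filter, Finset.mem_univ, true_and]; exact hi1)
              simp only [Finset.mem_filter, Finset.mem_univ, true_and] at this
              exact lt_irrefl u (this.trans_eq hi2)
          · right
            simp only [Finset.mem_image, Finset.mem_filter, Finset.mem_univ,
              true_and] at hmem
            obtain ⟨i, hi1, hi2⟩ := hmem
            apply Finset.card_lt_card
            constructor
            · exact hsuby
            · intro hsub
              have : i ∈ Finset.univ.filter (fun i => u < y i) := hsub (by
                simp only [Finset.mem_filter, Finset.mem_univ, true_and]; exact hi1)
              simp only [Finset.mem_filter, Finset.mem_univ, true_and] at this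
              exact lt_irrefl u (this.trans_eq hi2)
        have h1 := Finset.card_le_card hsubx
        have h2 := Finset.card_le_card hsuby
        omega
      have hIH := ih u (le_of_lt (lt_of_le_of_lt ht htu)) hcard'
      -- hypothesis at u
      have hH := h u (lt_of_le_of_lt ht htu)
      rw [Hsum x, Hsum y] at hH
      rw [splitx, splity]
      rw [← hm, ← hp] at hH ⊢
      -- conclude by case analysis on m vs p
      rcases le_or_gt (m : ℝ) (p : ℝ) with hmp | hmp
      · have h3 : (u - t) * (m : ℝ) ≤ (u - t) * (p : ℝ) :=
          mul_le_mul_of_nonneg_left hmp (by linarith)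
        linarith
      · have h3 : t * (p : ℝ) ≤ t * (m : ℝ) :=
          mul_le_mul_of_nonneg_left (le_of_lt hmp) ht
        nlinarith

/-- Core lemma: for any `A`, there is `B` of the same size with `∑_A x ≤ ∑_B y`. -/
lemma core_exists {d : ℕ} (x y : Fin d → ℝ) (hx : ∀ i, 0 ≤ x i) (hy : ∀ i, 0 ≤ y i)
    (h : ∀ t : ℝ, 0 < t →
      ∑ i ∈ Finset.univ.filter (fun i => t ≤ x i), x i ≤
      ∑ i ∈ Finset.univ.filter (fun i => t ≤ y i), y i)
    (A : Finset (Fin d)) :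
    ∃ B : Finset (Fin d), B.card = A.card ∧ ∑ i ∈ A, x i ≤ ∑ i ∈ B, y i := by
  rcases Nat.eq_zero_or_pos A.card with h0 | hpos
  · refine ⟨∅, by simp [h0], ?_⟩
    rw [Finset.card_eq_zero.mp h0]
    simp
  · -- pick a maximizer B of ∑ y over sets of cardinality A.card
    have hs : (Finset.univ.filter
        (fun B : Finset (Fin d) => B.card = A.card)).Nonempty := ⟨A, by simp⟩
    obtain ⟨B, hBmem, hBmax⟩ :=
      Finset.exists_max_image _ (fun B : Finset (Fin d) => ∑ i ∈ B, y i) hs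
    simp only [Finset.mem_filter, Finset.mem_univ, true_and] at hBmem
    have hBne : B.Nonempty := Finset.card_pos.mp (hBmem ▸ hpos)
    obtain ⟨j₀, hj₀B, hj₀min⟩ := Finset.exists_min_image B y hBne
    set t : ℝ := y j₀ with htdef
    have ht0 : 0 ≤ t := hy j₀
    have houtside : ∀ i, i ∉ B → y i ≤ t := by
      intro i hiB
      by_contra hc
      push_neg at hc
      set B' : Finset (Fin d) := insert i (B.erase j₀) with hB'
      have hinotin : i ∉ B.erase j₀ := fun hmem => hiB (Finset.mem_of_mem_erase hmem)
      have hcard' : B'.card = A.card := by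
        rw [hB', Finset.card_insert_of_notMem hinotin,
          Finset.card_erase_of_mem hj₀B, hBmem]
        omega
      have hsum' : ∑ i ∈ B', y i = y i + (∑ i ∈ B, y i - y j₀) := by
        rw [hB', Finset.sum_insert hinotin, Finset.sum_erase_eq_sub hj₀B]
      have hgt : ∑ i ∈ B, y i < ∑ i ∈ B', y i := by
        rw [hsum']
        linarith
      have := hBmax B' (by simp [hcard'])
      linarith
    -- key comparison at level t
    have hkey := key_aux x y hx hy h
      ((Finset.univ.filter (fun i => t < x i)).card
        + (Finset.univ.filter (fun i => t < y i)).card) t ht0 le_rfl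
    refine ⟨B, hBmem, ?_⟩
    have step1 : ∑ i ∈ A, x i ≤ A.card * t + ∑ i ∈ A, max (x i - t) 0 := by
      have : ∑ i ∈ A, x i ≤ ∑ i ∈ A, (t + max (x i - t) 0) := by
        apply Finset.sum_le_sum
        intro i _
        have := le_max_left (x i - t) 0
        linarith
      rw [Finset.sum_add_distrib, Finset.sum_const, nsmul_eq_mul] at this
      linarith
    have step2 : ∑ i ∈ A, max (x i - t) 0 ≤ ∑ i, max (x i - t) 0 := by
      apply Finset.sum_le_sum_of_subset_of_nonneg (Finset.subset_univ A)
      intro i _ _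
      exact le_max_right _ _
    have step3 : ∑ i, max (y i - t) 0 = ∑ i ∈ B, max (y i - t) 0 := by
      symm
      apply Finset.sum_subset (Finset.subset_univ B)
      intro i _ hiB
      exact max_eq_right (by linarith [houtside i hiB])
    have step4 : ∑ i ∈ B, max (y i - t) 0 = ∑ i ∈ B, y i - B.card * t := by
      have : ∑ i ∈ B, max (y i - t) 0 = ∑ i ∈ B, (y i - t) := by
        apply Finset.sum_congr rfl
        intro i hi
        exact max_eq_left (by linarith [hj₀min i hi])
      rw [this, Finset.sum_sub_distrib, Finset.sum_const, nsmul_eq_mul]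
    have hBA : (B.card : ℝ) = (A.card : ℝ) := by rw [hBmem]
    calc ∑ i ∈ A, x i ≤ A.card * t + ∑ i ∈ A, max (x i - t) 0 := step1
      _ ≤ A.card * t + ∑ i, max (x i - t) 0 := by linarith
      _ ≤ A.card * t + ∑ i, max (y i - t) 0 := by linarith
      _ = A.card * t + (∑ i ∈ B, y i - B.card * t) := by rw [step3, step4]
      _ = ∑ i ∈ B, y i := by rw [hBA]; ring

/-- If `∑_{i : x_i ≥ t} x_i ≤ ∑_{i : y_i ≥ t} y_i` for all `t > 0`, then `x ≺_w y`. -/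
theorem submajorization_of_upper_sums {d : ℕ} (x y : Fin d → ℝ)
    (hx : ∀ i, 0 ≤ x i) (hy : ∀ i, 0 ≤ y i)
    (h : ∀ t : ℝ, 0 < t →
      ∑ i ∈ Finset.univ.filter (fun i => t ≤ x i), x i ≤
      ∑ i ∈ Finset.univ.filter (fun i => t ≤ y i), y i) :
    Submaj x y := by
  intro k
  unfold kMaxSum
  by_cases hk : k ≤ d
  · have hfin : ∀ f : Fin d → ℝ,
        {t : ℝ | ∃ A : Finset (Fin d), A.card = k ∧ ∑ i ∈ A, f i = t}.Finite := by
      intro f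
      apply Set.Finite.subset (Set.finite_range (fun A : Finset (Fin d) => ∑ i ∈ A, f i))
      rintro t ⟨A, _, rfl⟩
      exact ⟨A, rfl⟩
    have hbdd : BddAbove {t : ℝ | ∃ A : Finset (Fin d), A.card = k ∧ ∑ i ∈ A, y i = t} :=
      (hfin y).bddAbove
    obtain ⟨A₀, _, hA₀⟩ := Finset.exists_subset_card_eq
      (show k ≤ (Finset.univ : Finset (Fin d)).card by
        rw [Finset.card_univ, Fintype.card_fin]; exact hk)
    have h0le : (0:ℝ) ≤ sSup {t : ℝ | ∃ A : Finset (Fin d), A.card = k ∧ ∑ i ∈ A, y i = t} := by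
      refine le_trans (Finset.sum_nonneg fun i _ => hy i) (le_csSup hbdd ⟨A₀, hA₀, rfl⟩)
    apply Real.sSup_le _ h0le
    rintro t ⟨A, hAcard, rfl⟩
    obtain ⟨B, hBcard, hle⟩ := core_exists x y hx hy h A
    exact hle.trans (le_csSup hbdd ⟨B, by rw [hBcard, hAcard], rfl⟩)
  · push_neg at hk
    have hempty : ∀ f : Fin d → ℝ,
        {t : ℝ | ∃ A : Finset (Fin d), A.card = k ∧ ∑ i ∈ A, f i = t} = ∅ := by
      intro f
      ext t
      simp only [Set.mem_setOf_eq, Set.mem_empty_iff_false, iff_false, not_exists]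
      rintro A ⟨hAcard, _⟩
      have : A.card ≤ d := by
        calc A.card ≤ (Finset.univ : Finset (Fin d)).card :=
          Finset.card_le_card (Finset.subset_univ A)
        _ = d := by rw [Finset.card_univ, Fintype.card_fin]
      omega
    rw [hempty x, hempty y]
end

section
/- For the catalyst z = ⊕_{k=0}^{n-1} x^{⊗(n-1-k)} ⊗ y^{⊗k}, there exists a vector w such that x ⊗ z = x^{⊗n} ⊕ w and y ⊗ z = y^{⊗n} ⊕ w (as multisets of coordinates). -/
/-!
Multisets of reals under `⊕` and `⊗` form a commutative semiring, so it suffices to work in an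
arbitrary one. There, with `z = ∑_{k ≤ m} x^(m-k) y^k`, multiplying by `x` shifts the exponents of
`x` up and splits off `x^(m+1)`, while multiplying by `y` shifts those of `y` up and splits off
`y^(m+1)`; what remains in both cases is `w = ∑_{k < m} x^(m-k) y^(k+1)`.
-/

open scoped BigOperators

/-- Tensor product of two multisets of real numbers (multiset of all pairwise products). -/
def mTensor (s t : Multiset ℝ) : Multiset ℝ := s.bind fun a => t.map (a * ·)

/-- `n`-fold tensor power of a multiset (`mPow s 0 = {1}`). -/
def mPow (s : Multiset ℝ) : ℕ → Multiset ℝ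
  | 0 => {1}
  | n + 1 => mTensor s (mPow s n)

open Finset

section CommSemiring

variable {R : Type*} [CommSemiring R]

theorem mul_sum_range_succ_pow_mul_pow_left (x y : R) (m : ℕ) :
    x * ∑ k ∈ range (m + 1), x ^ (m - k) * y ^ k
      = x ^ (m + 1) + ∑ k ∈ range m, x ^ (m - k) * y ^ (k + 1) := by
  rw [mul_sum, sum_range_succ', add_comm]
  congr 1
  · simp [pow_succ']
  · refine sum_congr rfl fun k hk => ?_
    have := mem_range.1 hk
    rw [← mul_assoc, ← pow_succ']
    congr 2
    omega

theorem mul_sum_range_succ_pow_mul_pow_right (x y : R) (m : ℕ) :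
    y * ∑ k ∈ range (m + 1), x ^ (m - k) * y ^ k
      = y ^ (m + 1) + ∑ k ∈ range m, x ^ (m - k) * y ^ (k + 1) := by
  rw [mul_sum, sum_range_succ, add_comm]
  congr 1
  · simp [pow_succ']
  · refine sum_congr rfl fun k _ => ?_
    rw [mul_left_comm, ← pow_succ']

end CommSemiring

@[simp] theorem zero_mTensor (t : Multiset ℝ) : mTensor 0 t = 0 := rfl

@[simp] theorem mTensor_zero (s : Multiset ℝ) : mTensor s 0 = 0 := by
  simp [mTensor]

theorem mTensor_add_left (s t u : Multiset ℝ) :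
    mTensor (s + t) u = mTensor s u + mTensor t u :=
  Multiset.add_bind ..

theorem mTensor_add_right (s t u : Multiset ℝ) :
    mTensor s (t + u) = mTensor s t + mTensor s u := by
  simp [mTensor, Multiset.bind_add]

theorem mTensor_comm (s t : Multiset ℝ) : mTensor s t = mTensor t s := by
  induction s using Multiset.induction with
  | empty => simp
  | cons a s ih =>
    rw [← Multiset.singleton_add, mTensor_add_left, mTensor_add_right, ih]
    simp [mTensor, mul_comm]

theorem mTensor_assoc (s t u : Multiset ℝ) :
    mTensor (mTensor s t) u = mTensor s (mTensor t u) := by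
  simp only [mTensor, Multiset.bind_assoc, Multiset.bind_map, Multiset.map_bind,
    Multiset.map_map, Function.comp_def, mul_assoc]

@[simp] theorem one_mTensor (t : Multiset ℝ) : mTensor {1} t = t := by
  simp [mTensor]

@[simp] theorem mTensor_one (s : Multiset ℝ) : mTensor s {1} = s := by
  rw [mTensor_comm, one_mTensor]

/-- The monoid semiring `ℕ[ℝ]` of the multiplicative monoid `ℝ`, realised on multisets. Its
`npow` is `mPow`, so powers here are definitionally tensor powers. -/
def TensorMultiset := Multiset ℝ

instance : CommSemiring TensorMultiset where
  __ := (inferInstance : AddCommMonoid (Multiset ℝ))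
  mul := mTensor
  one := ({1} : Multiset ℝ)
  left_distrib := mTensor_add_right
  right_distrib := mTensor_add_left
  zero_mul := zero_mTensor
  mul_zero := mTensor_zero
  mul_assoc := mTensor_assoc
  one_mul := one_mTensor
  mul_one := mTensor_one
  mul_comm := mTensor_comm
  npow n s := mPow s n
  npow_zero _ := rfl
  npow_succ _ s := mTensor_comm s _

theorem catalyst_identity_general (x y : Multiset ℝ)
    (n : ℕ) (hn : 1 ≤ n) :
    ∃ w : Multiset ℝ,
      mTensor x (∑ k ∈ Finset.range n, mTensor (mPow x (n - 1 - k)) (mPow y k))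
        = mPow x n + w ∧
      mTensor y (∑ k ∈ Finset.range n, mTensor (mPow x (n - 1 - k)) (mPow y k))
        = mPow y n + w := by
  obtain ⟨m, rfl⟩ : ∃ m, n = m + 1 := ⟨n - 1, by omega⟩
  simp only [add_tsub_cancel_right]
  exact ⟨_, mul_sum_range_succ_pow_mul_pow_left (R := TensorMultiset) x y m,
    mul_sum_range_succ_pow_mul_pow_right (R := TensorMultiset) x y m⟩

/-- For the catalyst `z = ⊕_{k=0}^{n-1} x^{⊗(n-1-k)} ⊗ y^{⊗k}`, there is a vector `w`
with `x ⊗ z = x^{⊗n} ⊕ w` and `y ⊗ z = y^{⊗n} ⊕ w`, as multisets of coordinates. -/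
theorem catalyst_identity (x y : Multiset ℝ)
    (hx : ∀ a ∈ x, (0 : ℝ) ≤ a) (hy : ∀ a ∈ y, (0 : ℝ) ≤ a)
    (n : ℕ) (hn : 1 ≤ n) :
    ∃ w : Multiset ℝ,
      mTensor x (∑ k ∈ Finset.range n, mTensor (mPow x (n - 1 - k)) (mPow y k))
        = mPow x n + w ∧
      mTensor y (∑ k ∈ Finset.range n, mTensor (mPow x (n - 1 - k)) (mPow y k))
        = mPow y n + w :=
  catalyst_identity_general x y n hn
end

section
/- Let x, y be finitely supported probability vectors. If there exists a sequence (x_n) of finitely supported probability vectors with ‖x_n - x‖₁ → 0 and for each n a finitely supported probability vector z_n with x_n ⊗ z_n ≺ y ⊗ z_n, then ‖x‖_p ≤ ‖y‖_p for all p ≥ 1. -/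
open scoped BigOperators

def MajT {ι κ : Type*} (f : ι → ℝ) (g : κ → ℝ) : Prop :=
  (∑' i, f i = ∑' j, g j) ∧ Submaj f g

def IsFinProbVec (f : ℕ → ℝ) : Prop :=
  (∀ i, 0 ≤ f i) ∧ (Function.support f).Finite ∧ ∑' i, f i = 1

noncomputable def pNormT {ι : Type*} (f : ι → ℝ) (p : ℝ) : ℝ :=
  (∑' i, f i ^ p) ^ (1 / p)

/-!
For `p > 1` the power function is a superposition of hinge functions,
`s ^ p = p (p - 1) ∫₀^M (s - t)⁺ t ^ (p - 2) dt` for `0 ≤ s ≤ M`. Submajorization controls every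
hinge sum: if `k` entries of `f` exceed `t`, then `∑ (f i - t)⁺` is the sum of those `k` entries
minus `k t`, at most `kMaxSum g k - k t ≤ ∑ (g j - t)⁺`. Integrating gives `∑ f ^ p ≤ ∑ g ^ p`
(and `t = 0` gives the case `p = 1`). Applied to `x_n ⊗ z_n` and `y ⊗ z_n`, power sums factor over
the tensor product, so the catalyst's factor `∑ z_n ^ p > 0` cancels. Finally `ℓ¹`-convergence gives
coordinatewise convergence, and since `x` has finite support its power sum is a limit of partial
power sums of the `x_n`.
-/

open Filter Function MeasureTheory Topology

variable {ι κ : Type*}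

section FiniteSupport

lemma summable_rpow_of_finite_support {f : ι → ℝ} (hf : (support f).Finite) {p : ℝ}
    (hp : p ≠ 0) : Summable fun i => f i ^ p :=
  summable_of_hasFiniteSupport <| hf.subset <|
    support_comp_subset (g := (· ^ p)) (Real.zero_rpow hp) f

lemma tsum_rpow_eq_sum {f : ι → ℝ} {s : Finset ι} (hs : support f ⊆ s) {p : ℝ} (hp : p ≠ 0) :
    ∑' i, f i ^ p = ∑ i ∈ s, f i ^ p :=
  tsum_eq_sum' <| (support_comp_subset (g := (· ^ p)) (Real.zero_rpow hp) f).trans hs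

lemma tsum_rpow_pos {f : ι → ℝ} (hf0 : ∀ i, 0 ≤ f i) (hf : (support f).Finite) {p : ℝ}
    (hp : p ≠ 0) {i : ι} (hi : f i ≠ 0) : 0 < ∑' i, f i ^ p :=
  (summable_rpow_of_finite_support hf hp).tsum_pos (fun j => Real.rpow_nonneg (hf0 j) p) i
    (Real.rpow_pos_of_pos ((hf0 i).lt_of_ne' hi) p)

lemma tensor_nonneg {f : ι → ℝ} {g : κ → ℝ} (hf0 : ∀ i, 0 ≤ f i) (hg0 : ∀ j, 0 ≤ g j)
    (q : ι × κ) : 0 ≤ tensor f g q :=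
  mul_nonneg (hf0 q.1) (hg0 q.2)

lemma finite_support_tensor {f : ι → ℝ} {g : κ → ℝ} (hf : (support f).Finite)
    (hg : (support g).Finite) : (support (tensor f g)).Finite :=
  (hf.prod hg).subset fun _ hq => ⟨left_ne_zero_of_mul hq, right_ne_zero_of_mul hq⟩

lemma tsum_tensor_rpow {f : ι → ℝ} {g : κ → ℝ} (hf0 : ∀ i, 0 ≤ f i) (hg0 : ∀ j, 0 ≤ g j)
    (hf : (support f).Finite) (hg : (support g).Finite) {p : ℝ} (hp : p ≠ 0) :
    ∑' q, tensor f g q ^ p = (∑' i, f i ^ p) * ∑' j, g j ^ p := by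
  rw [tsum_mul_tsum_of_summable_norm (summable_rpow_of_finite_support hf hp).norm
    (summable_rpow_of_finite_support hg hp).norm]
  exact tsum_congr fun q => Real.mul_rpow (hf0 q.1) (hg0 q.2)

lemma tsum_posPart_sub_eq_sum {f : ι → ℝ} {s : Finset ι} (hs : support f ⊆ s) {t : ℝ}
    (ht : 0 ≤ t) : ∑' i, max (f i - t) 0 = ∑ i ∈ s, max (f i - t) 0 :=
  tsum_eq_sum' <| (support_comp_subset (g := fun u => max (u - t) 0) (by simpa using ht) f).trans hs

lemma continuousOn_tsum_posPart_sub {f : ι → ℝ} (hf : (support f).Finite) :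
    ContinuousOn (fun t => ∑' i, max (f i - t) 0) (Set.Ici 0) :=
  (continuous_finsetSum hf.toFinset fun i _ => by fun_prop).continuousOn.congr fun _ ht =>
    tsum_posPart_sub_eq_sum hf.coe_toFinset.superset ht

end FiniteSupport

section Submajorization

lemma sum_le_kMaxSum {f : ι → ℝ} (hf0 : ∀ i, 0 ≤ f i) (hf : Summable f) (A : Finset ι) :
    ∑ i ∈ A, f i ≤ kMaxSum f A.card :=
  le_csSup ⟨∑' i, f i, by rintro _ ⟨B, -, rfl⟩; exact hf.sum_le_tsum B fun i _ => hf0 i⟩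
    ⟨A, rfl, rfl⟩

lemma kMaxSum_le_tsum_posPart_sub_add [Infinite κ] {g : κ → ℝ} (hg0 : ∀ j, 0 ≤ g j)
    (hg : Summable g) {t : ℝ} (ht : 0 ≤ t) (k : ℕ) :
    kMaxSum g k ≤ ∑' j, max (g j - t) 0 + k * t := by
  have hsum : Summable fun j => max (g j - t) 0 :=
    hg.of_nonneg_of_le (fun j => le_max_right _ _) fun j => max_le (by linarith) (hg0 j)
  obtain ⟨B, hB⟩ := Infinite.exists_subset_card_eq κ k
  refine csSup_le ⟨_, B, hB, rfl⟩ ?_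
  rintro _ ⟨B, rfl, rfl⟩
  calc ∑ j ∈ B, g j ≤ ∑ j ∈ B, (max (g j - t) 0 + t) :=
        Finset.sum_le_sum fun j _ => by linarith [le_max_left (g j - t) 0]
    _ = ∑ j ∈ B, max (g j - t) 0 + B.card * t := by
        rw [Finset.sum_add_distrib, Finset.sum_const, nsmul_eq_mul]
    _ ≤ ∑' j, max (g j - t) 0 + B.card * t := by
        gcongr
        exact hsum.sum_le_tsum B fun j _ => le_max_right _ _

lemma tsum_posPart_sub_le_of_submaj [Infinite κ] {f : ι → ℝ} {g : κ → ℝ}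
    (hf0 : ∀ i, 0 ≤ f i) (hf : (support f).Finite) (hg0 : ∀ j, 0 ≤ g j) (hg : Summable g)
    (hfg : Submaj f g) {t : ℝ} (ht : 0 ≤ t) :
    ∑' i, max (f i - t) 0 ≤ ∑' j, max (g j - t) 0 := by
  classical
  set A := hf.toFinset.filter (t < f ·)
  have hout : ∀ i ∉ A, max (f i - t) 0 = 0 := fun i hi => max_eq_right <| by
    by_contra! h
    exact hi (Finset.mem_filter.2 ⟨hf.mem_toFinset.2 (ht.trans_lt (by linarith)).ne', by linarith⟩)
  have hA : ∑' i, max (f i - t) 0 = ∑ i ∈ A, f i - A.card * t := by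
    rw [tsum_eq_sum hout, ← nsmul_eq_mul, ← Finset.sum_const, ← Finset.sum_sub_distrib]
    exact Finset.sum_congr rfl fun i hi => max_eq_left (sub_nonneg.2 (Finset.mem_filter.1 hi).2.le)
  have hAf := sum_le_kMaxSum hf0 (summable_of_hasFiniteSupport hf) A
  have hAg := kMaxSum_le_tsum_posPart_sub_add hg0 hg ht A.card
  linarith [hfg A.card]

end Submajorization

section IntegralRepresentation

lemma intervalIntegrable_posPart_sub_mul_rpow {p : ℝ} (hp : 1 < p) (s a b : ℝ) :
    IntervalIntegrable (fun t => max (s - t) 0 * t ^ (p - 2)) volume a b :=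
  (intervalIntegral.intervalIntegrable_rpow' (by linarith)).continuousOn_mul (by fun_prop)

lemma rpow_eq_mul_integral_posPart_sub {p s M : ℝ} (hp : 1 < p) (hs : 0 ≤ s) (hsM : s ≤ M) :
    s ^ p = p * (p - 1) * ∫ t in 0..M, max (s - t) 0 * t ^ (p - 2) := by
  have hint := intervalIntegrable_posPart_sub_mul_rpow hp s
  have htail : ∫ t in s..M, max (s - t) 0 * t ^ (p - 2) = 0 := by
    rw [← intervalIntegral.integral_zero]
    refine intervalIntegral.integral_congr fun t ht => ?_
    rw [Set.uIcc_of_le hsM] at ht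
    simp [ht.1]
  have hhead : ∫ t in 0..s, max (s - t) 0 * t ^ (p - 2)
      = ∫ t in 0..s, (s * t ^ (p - 2) - t ^ (p - 1)) := by
    refine intervalIntegral.integral_congr fun t ht => ?_
    rw [Set.uIcc_of_le hs] at ht
    rw [max_eq_left (by linarith [ht.2]), show p - 1 = p - 2 + 1 by ring,
      Real.rpow_add_one' ht.1 (by linarith)]
    ring
  have hpoly : ∫ t in 0..s, (s * t ^ (p - 2) - t ^ (p - 1))
      = s * (s ^ (p - 1) / (p - 1)) - s ^ p / p := by
    rw [intervalIntegral.integral_sub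
        ((intervalIntegral.intervalIntegrable_rpow' (by linarith)).const_mul s)
        (intervalIntegral.intervalIntegrable_rpow' (by linarith)),
      intervalIntegral.integral_const_mul, integral_rpow (Or.inl (by linarith)),
      integral_rpow (Or.inl (by linarith)), Real.zero_rpow (by linarith),
      Real.zero_rpow (by linarith), show p - 2 + 1 = p - 1 by ring, sub_add_cancel, sub_zero,
      sub_zero]
  have hsp : s * s ^ (p - 1) = s ^ p := by
    rw [mul_comm, ← Real.rpow_add_one' hs (by linarith), sub_add_cancel]
  have hp' : p - 1 ≠ 0 := by linarith
  rw [← intervalIntegral.integral_add_adjacent_intervals (hint 0 s) (hint s M), htail, hhead,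
    hpoly, add_zero, ← hsp]
  field_simp
  ring

lemma tsum_rpow_eq_mul_integral {f : ι → ℝ} {p M : ℝ} (hp : 1 < p) (hf0 : ∀ i, 0 ≤ f i)
    (hf : (support f).Finite) (hfM : ∀ i, f i ≤ M) (hM : 0 ≤ M) :
    ∑' i, f i ^ p = p * (p - 1) * ∫ t in 0..M, (∑' i, max (f i - t) 0) * t ^ (p - 2) := by
  rw [tsum_rpow_eq_sum (s := hf.toFinset) hf.coe_toFinset.superset (by linarith),
    Finset.sum_congr rfl fun i _ => rpow_eq_mul_integral_posPart_sub hp (hf0 i) (hfM i),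
    ← Finset.mul_sum, ← intervalIntegral.integral_finsetSum fun i _ =>
      intervalIntegrable_posPart_sub_mul_rpow hp (f i) 0 M]
  congr 1
  refine intervalIntegral.integral_congr fun t ht => ?_
  rw [Set.uIcc_of_le hM] at ht
  simp only [tsum_posPart_sub_eq_sum (s := hf.toFinset) hf.coe_toFinset.superset ht.1,
    Finset.sum_mul]

lemma intervalIntegrable_tsum_posPart_sub_mul_rpow {f : ι → ℝ} (hf : (support f).Finite)
    {p M : ℝ} (hp : 1 < p) (hM : 0 ≤ M) :
    IntervalIntegrable (fun t => (∑' i, max (f i - t) 0) * t ^ (p - 2)) volume 0 M :=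
  (intervalIntegral.intervalIntegrable_rpow' (by linarith)).continuousOn_mul <|
    (continuousOn_tsum_posPart_sub hf).mono <| by
      rw [Set.uIcc_of_le hM]; exact Set.Icc_subset_Ici_self

end IntegralRepresentation

theorem tsum_rpow_le_of_submaj [Infinite κ] {f : ι → ℝ} {g : κ → ℝ} (hf0 : ∀ i, 0 ≤ f i)
    (hf : (support f).Finite) (hg0 : ∀ j, 0 ≤ g j) (hg : (support g).Finite)
    (hfg : Submaj f g) {p : ℝ} (hp : 1 ≤ p) : ∑' i, f i ^ p ≤ ∑' j, g j ^ p := by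
  have hfs : Summable f := summable_of_hasFiniteSupport hf
  have hgs : Summable g := summable_of_hasFiniteSupport hg
  rcases hp.eq_or_lt with rfl | hp
  · simpa [max_eq_left (hf0 _), max_eq_left (hg0 _)] using
      tsum_posPart_sub_le_of_submaj hf0 hf hg0 hgs hfg le_rfl
  obtain ⟨M, hM, hfM, hgM⟩ : ∃ M : ℝ, 0 ≤ M ∧ (∀ i, f i ≤ M) ∧ ∀ j, g j ≤ M :=
    ⟨max (∑' i, f i) (∑' j, g j), le_max_of_le_left (tsum_nonneg hf0),
      fun i => le_max_of_le_left (hfs.le_tsum i fun j _ => hf0 j),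
      fun j => le_max_of_le_right (hgs.le_tsum j fun i _ => hg0 i)⟩
  rw [tsum_rpow_eq_mul_integral hp hf0 hf hfM hM, tsum_rpow_eq_mul_integral hp hg0 hg hgM hM]
  refine mul_le_mul_of_nonneg_left (intervalIntegral.integral_mono_on hM
    (intervalIntegrable_tsum_posPart_sub_mul_rpow hf hp hM)
    (intervalIntegrable_tsum_posPart_sub_mul_rpow hg hp hM) fun t ht => ?_) (by nlinarith)
  exact mul_le_mul_of_nonneg_right (tsum_posPart_sub_le_of_submaj hf0 hf hg0 hgs hfg ht.1)
    (Real.rpow_nonneg ht.1 _)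

section Limits

variable {α : Type*} {l : Filter α}

lemma tendsto_apply_of_tendsto_tsum_abs_sub {xs : α → ι → ℝ} {x : ι → ℝ}
    (hsum : ∀ n, Summable fun i => |xs n i - x i|)
    (h : Tendsto (fun n => ∑' i, |xs n i - x i|) l (𝓝 0)) (i : ι) :
    Tendsto (fun n => xs n i) l (𝓝 (x i)) :=
  tendsto_iff_norm_sub_tendsto_zero.2 <|
    squeeze_zero (fun _ => norm_nonneg _) (fun n => (hsum n).le_tsum i fun _ _ => abs_nonneg _) h

lemma tsum_rpow_le_of_tendsto [l.NeBot] {xs : α → ι → ℝ} {x : ι → ℝ} {p C : ℝ} (hp : 0 < p)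
    (hxs0 : ∀ n i, 0 ≤ xs n i) (hxs : ∀ n, Summable fun i => xs n i ^ p)
    (hx : (support x).Finite) (hlim : ∀ i, Tendsto (fun n => xs n i) l (𝓝 (x i)))
    (hC : ∀ n, ∑' i, xs n i ^ p ≤ C) : ∑' i, x i ^ p ≤ C := by
  rw [tsum_rpow_eq_sum (s := hx.toFinset) hx.coe_toFinset.superset hp.ne']
  refine le_of_tendsto' (tendsto_finsetSum _ fun i _ => (hlim i).rpow_const (Or.inr hp.le))
    fun n => ((hxs n).sum_le_tsum _ fun i _ => Real.rpow_nonneg (hxs0 n i) p).trans (hC n)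

end Limits

/-- (b) ⇒ (c) of the main theorem: if `x` is an ℓ¹-limit of finitely supported
probability vectors `x_n`, each trumped by `y` (i.e. `x_n ⊗ z_n ≺ y ⊗ z_n` for some
finitely supported probability catalyst `z_n`), then `‖x‖_p ≤ ‖y‖_p` for all `p ≥ 1`. -/
theorem pNorm_le_of_approx_catalytic (x y : ℕ → ℝ) (xs zs : ℕ → ℕ → ℝ)
    (hx : IsFinProbVec x) (hy : IsFinProbVec y)
    (hxs : ∀ n, IsFinProbVec (xs n)) (hzs : ∀ n, IsFinProbVec (zs n))
    (hconv : Filter.Tendsto (fun n => ∑' i, |xs n i - x i|) Filter.atTop (nhds 0))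
    (hmaj : ∀ n, MajT (tensor (xs n) (zs n)) (tensor y (zs n))) :
    ∀ p : ℝ, 1 ≤ p → pNormT x p ≤ pNormT y p := by
  intro p hp
  have hp0 : 0 < p := by linarith
  have hcatalysed : ∀ n, ∑' i, xs n i ^ p ≤ ∑' i, y i ^ p := fun n => by
    obtain ⟨hxn0, hxn, -⟩ := hxs n
    obtain ⟨hz0, hz, hz1⟩ := hzs n
    obtain ⟨j, hj⟩ : ∃ j, zs n j ≠ 0 := by
      by_contra! h
      simp [h] at hz1
    have htensor := tsum_rpow_le_of_submaj (tensor_nonneg hxn0 hz0)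
      (finite_support_tensor hxn hz) (tensor_nonneg hy.1 hz0) (finite_support_tensor hy.2.1 hz)
      (hmaj n).2 hp
    rw [tsum_tensor_rpow hxn0 hz0 hxn hz hp0.ne', tsum_tensor_rpow hy.1 hz0 hy.2.1 hz hp0.ne']
      at htensor
    exact le_of_mul_le_mul_right htensor (tsum_rpow_pos hz0 hz hp0.ne' hj)
  have hsum_abs : ∀ n, Summable fun i => |xs n i - x i| := fun n =>
    summable_of_hasFiniteSupport <| ((hxs n).2.1.union hx.2.1).subset <|
      (support_comp_subset abs_zero _).trans (support_sub _ _)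
  have hpow : ∑' i, x i ^ p ≤ ∑' i, y i ^ p :=
    tsum_rpow_le_of_tendsto hp0 (fun n => (hxs n).1)
      (fun n => summable_rpow_of_finite_support (hxs n).2.1 hp0.ne') hx.2.1
      (tendsto_apply_of_tendsto_tsum_abs_sub hsum_abs hconv) hcatalysed
  exact Real.rpow_le_rpow (tsum_nonneg fun i => Real.rpow_nonneg (hx.1 i) p) hpow (by positivity)
end

section
/- Let x, y be probability vectors in P_d with x_max < y_max (largest coordinates), and set p_max = log d / (log y_max − log x_max). If ‖x‖_p ≤ ‖y‖_p for all p ∈ [1, p_max], then ‖x‖_p ≤ ‖y‖_p for all p ≥ 1. -/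
open scoped BigOperators

noncomputable def pNorm {ι : Type*} [Fintype ι] (f : ι → ℝ) (p : ℝ) : ℝ :=
  (∑ i, f i ^ p) ^ (1 / p)

/-- If `x, y ∈ P_d` with `x_max < y_max` and `‖x‖_p ≤ ‖y‖_p` holds for all
`p ∈ [1, p_max]` where `p_max = log d / (log y_max - log x_max)`, then
`‖x‖_p ≤ ‖y‖_p` holds for all `p ≥ 1`. -/
theorem pNorm_le_of_le_up_to_pmax {d : ℕ} (x y : Fin d → ℝ)
    (hx0 : ∀ i, 0 ≤ x i) (hx1 : ∑ i, x i = 1)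
    (hy0 : ∀ i, 0 ≤ y i) (hy1 : ∑ i, y i = 1)
    (hmax : (⨆ i, x i) < ⨆ i, y i)
    (hp : ∀ p : ℝ,
      p ∈ Set.Icc 1 (Real.log d / (Real.log (⨆ i, y i) - Real.log (⨆ i, x i))) →
      pNorm x p ≤ pNorm y p) :
    ∀ p : ℝ, 1 ≤ p → pNorm x p ≤ pNorm y p := by
  intro p hp1
  have hd : 0 < d := by
    rcases Nat.eq_zero_or_pos d with h | h
    · subst h; simp at hx1
    · exact h
  haveI : Nonempty (Fin d) := Fin.pos_iff_nonempty.mp hd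
  set M := ⨆ i, x i with hM
  set N := ⨆ i, y i with hN
  have hbx : BddAbove (Set.range x) := (Set.finite_range x).bddAbove
  have hby : BddAbove (Set.range y) := (Set.finite_range y).bddAbove
  -- M > 0
  have hMpos : 0 < M := by
    by_contra h
    push_neg at h
    have : ∀ i, x i = 0 := fun i => le_antisymm ((le_ciSup hbx i).trans h) (hx0 i)
    simp [this] at hx1
  have hNpos : 0 < N := hMpos.trans hmax
  have hΔ : 0 < Real.log N - Real.log M := by
    have := Real.log_lt_log hMpos hmax
    linarith
  have hppos : 0 < p := lt_of_lt_of_le one_pos hp1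
  by_cases hcase : p ≤ Real.log d / (Real.log N - Real.log M)
  · exact hp p ⟨hp1, hcase⟩
  · push_neg at hcase
    have hlog : Real.log d < p * (Real.log N - Real.log M) :=
      (div_lt_iff₀ hΔ).mp hcase
    have hdpos : (0:ℝ) < (d:ℝ) := Nat.cast_pos.mpr hd
    -- d^(1/p) * M < N
    have key : (d:ℝ) ^ (1/p) * M < N := by
      have h1 : Real.log ((d:ℝ) ^ (1/p) * M) < Real.log N := by
        rw [Real.log_mul (by positivity) (ne_of_gt hMpos), Real.log_rpow hdpos]
        have h1p : 1 / p * Real.log d < Real.log N - Real.log M := by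
          rw [one_div, inv_mul_lt_iff₀ hppos]
          linarith
        linarith
      have := Real.exp_lt_exp.mpr h1
      rwa [Real.exp_log (by positivity), Real.exp_log hNpos] at this
    -- pNorm x p ≤ d^(1/p) * M
    have hxle : pNorm x p ≤ (d:ℝ) ^ (1/p) * M := by
      have hsum : ∑ i, x i ^ p ≤ (d:ℝ) * M ^ p := by
        calc ∑ i, x i ^ p ≤ ∑ _i : Fin d, M ^ p :=
              Finset.sum_le_sum fun i _ =>
                Real.rpow_le_rpow (hx0 i) (le_ciSup hbx i) hppos.le
          _ = (d:ℝ) * M ^ p := by simp [mul_comm]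
      have h2 : pNorm x p ≤ ((d:ℝ) * M ^ p) ^ (1/p) :=
        Real.rpow_le_rpow (Finset.sum_nonneg fun i _ =>
          Real.rpow_nonneg (hx0 i) p) hsum (by positivity)
      calc pNorm x p ≤ ((d:ℝ) * M ^ p) ^ (1/p) := h2
        _ = (d:ℝ) ^ (1/p) * M := by
            rw [Real.mul_rpow hdpos.le (Real.rpow_nonneg hMpos.le p),
              ← Real.rpow_mul hMpos.le, mul_one_div, div_self (ne_of_gt hppos),
              Real.rpow_one]
    -- N ≤ pNorm y p
    have hyge : N ≤ pNorm y p := by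
      obtain ⟨j, hj⟩ := exists_eq_ciSup_of_finite (f := y)
      have hsum : N ^ p ≤ ∑ i, y i ^ p := by
        rw [hN, ← hj]
        exact Finset.single_le_sum (fun i _ => Real.rpow_nonneg (hy0 i) p)
          (Finset.mem_univ j)
      have := Real.rpow_le_rpow (Real.rpow_nonneg hNpos.le p) hsum (by positivity :
        (0:ℝ) ≤ 1/p)
      rwa [← Real.rpow_mul hNpos.le, mul_one_div, div_self (ne_of_gt hppos),
        Real.rpow_one] at this
    linarith
end
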